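/- Let α be an odd integer with α ≥ 5, and let β be coprime to α with 2 ≤ β ≤ α - 2. Then S(α, β) ≤ (α + 3)/2. -/
import Mathlib


/-- Sum of the partial quotients of the regular continued fraction expansion
of `p / q`, computed via the Euclidean algorithm. -/
def S (p q : ℕ) : ℕ :=
  if _h : q = 0 then 0 else p / q + S q (p % q)
termination_by q
decreasing_by exact Nat.mod_lt _ (Nat.pos_of_ne_zero _h)

lemma S_zero (p : ℕ) : S p 0 = 0 := by rw [S]; simp

lemma S_one (p : ℕ) : S p 1 = p := by
  rw [S, dif_neg one_ne_zero]
  simp [Nat.mod_one, S_zero]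

lemma prod_ineq (a q : ℕ) (ha : 1 ≤ a) (hq : 2 ≤ q) : 2 * a + q ≤ a * q + 2 := by
  have h3 : q - 2 ≤ a * (q - 2) := Nat.le_mul_of_pos_left _ ha
  have h4 : a * q = a * (q - 2) + a * 2 := by rw [← Nat.mul_add]; congr 1; omega
  omega

lemma prod_ineq2 (a q : ℕ) (ha : 2 ≤ a) (hq : 2 ≤ q) : 2 * a + 2 * q ≤ a * q + 4 := by
  have h3 : 2 * (q - 2) ≤ a * (q - 2) := Nat.mul_le_mul_right _ ha
  have h4 : a * q = a * (q - 2) + a * 2 := by rw [← Nat.mul_add]; congr 1; omega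
  omega

lemma key : ∀ q p : ℕ, 2 ≤ q → q + 2 ≤ p → Nat.Coprime p q → 2 * S p q ≤ p + 3 := by
  intro q
  induction q using Nat.strong_induction_on with
  | _ q ih =>
    intro p hq hp hcop
    have hq0 : q ≠ 0 := by omega
    have hdiv : q * (p / q) + p % q = p := Nat.div_add_mod p q
    have hrlt : p % q < q := Nat.mod_lt _ (by omega)
    have hr0 : p % q ≠ 0 := by
      intro h
      have hd : q ∣ p := Nat.dvd_of_mod_eq_zero h
      have : q ∣ Nat.gcd p q := Nat.dvd_gcd hd dvd_rfl
      rw [hcop] at this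
      have := Nat.le_of_dvd one_pos this
      omega
    have ha1 : 1 ≤ p / q := (Nat.one_le_div_iff (by omega)).mpr (by omega)
    have hcqr : Nat.Coprime q (p % q) := by
      have h : Nat.gcd q p = 1 := hcop.symm
      rw [Nat.gcd_rec] at h
      exact Nat.Coprime.symm h
    have hS : S p q = p / q + S q (p % q) := by rw [S, dif_neg hq0]
    rcases eq_or_ne (p % q) 1 with h1 | h1
    · -- r = 1
      rw [hS, h1, S_one]
      have ha2 : 2 ≤ p / q := by
        rcases Nat.lt_or_ge (p / q) 2 with hc | hc
        · have he : p / q = 1 := by omega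
          rw [he, h1] at hdiv; omega
        · exact hc
      have := prod_ineq2 (p / q) q ha2 hq
      have h5 := hdiv
      rw [Nat.mul_comm] at h5
      omega
    rcases eq_or_ne (p % q) (q - 1) with h2 | h2
    · -- r = q - 1, q ≥ 3
      have hq3 : 3 ≤ q := by omega
      have hSq : S q (q - 1) = q := by
        rw [S, dif_neg (by omega : q - 1 ≠ 0)]
        have hd1 : q / (q - 1) = 1 := by
          rw [Nat.div_eq_of_lt_le] <;> omega
        have hm1 : q % (q - 1) = 1 := by
          rw [Nat.mod_eq_sub_mod (by omega)]
          rw [Nat.mod_eq_of_lt] <;> omega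
        rw [hd1, hm1, S_one]
        omega
      rw [hS, h2, hSq]
      have := prod_ineq (p / q) q ha1 hq
      have := hdiv
      rw [Nat.mul_comm] at this
      omega
    · -- 2 ≤ r ≤ q - 2
      have hr2 : 2 ≤ p % q := by omega
      have hrq : p % q + 2 ≤ q := by omega
      have hIH := ih (p % q) hrlt q hr2 hrq hcqr
      rw [hS]
      have := prod_ineq (p / q) q ha1 hq
      have h5 := hdiv
      rw [Nat.mul_comm] at h5
      omega

theorem stmt_6 (α β : ℕ) (hodd : Odd α) (hα : 5 ≤ α) (hcop : Nat.Coprime α β)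
    (hβ : 2 ≤ β) (hβα : β ≤ α - 2) :
    S α β ≤ (α + 3) / 2 := by
  have h := key β α hβ (by omega) hcop
  rw [Nat.le_div_iff_mul_le (by norm_num)]
  omega
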